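/- Let f : ℝ⁴ → ℝ be given by f(x,u,p,q) = (3/2)·q²/p on the open set where p ≠ 0. Then the relative invariant I₂ = f_{qq}² + 6 f_{pqq} equals −9/p² at every point of this set; in particular I₂ does not vanish anywhere on this set. -/

import Mathlib

/-- Partial derivative with respect to the first variable `x`. -/
noncomputable def pX (g : ℝ → ℝ → ℝ → ℝ → ℝ) (x u p q : ℝ) : ℝ :=
  deriv (fun t => g t u p q) x

/-- Partial derivative with respect to the second variable `u`. -/
noncomputable def pU (g : ℝ → ℝ → ℝ → ℝ → ℝ) (x u p q : ℝ) : ℝ :=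
  deriv (fun t => g x t p q) u

/-- Partial derivative with respect to the third variable `p`. -/
noncomputable def pP (g : ℝ → ℝ → ℝ → ℝ → ℝ) (x u p q : ℝ) : ℝ :=
  deriv (fun t => g x u t q) p

/-- Partial derivative with respect to the fourth variable `q`. -/
noncomputable def pQ (g : ℝ → ℝ → ℝ → ℝ → ℝ) (x u p q : ℝ) : ℝ :=
  deriv (fun t => g x u p t) q

/-- The total derivative operator
`D_x = ∂/∂x + p ∂/∂u + q ∂/∂p + f ∂/∂q` associated with the ODE `u''' = f`. -/
noncomputable def Dx (f g : ℝ → ℝ → ℝ → ℝ → ℝ) : ℝ → ℝ → ℝ → ℝ → ℝ :=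
  fun x u p q =>
    pX g x u p q + p * pU g x u p q + q * pP g x u p q + f x u p q * pQ g x u p q

/-- The right hand side of the nonlinear ODE of Example 3.3: `u''' = (3/2)u''²/u'`. -/
noncomputable def f : ℝ → ℝ → ℝ → ℝ → ℝ := fun _x _u p q => (3 / 2) * q ^ 2 / p

lemma pQ_div_right (h : ℝ → ℝ) :
    pQ (fun _x _u p q => h q / p) = fun _x _u p q => deriv h q / p := by
  funext x u p q
  exact deriv_div_const p

lemma pQ_f : pQ f = fun _x _u p q => 3 * q / p := by
  rw [show f = fun _x _u p q => (3 / 2 * q ^ 2) / p from rfl, pQ_div_right]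
  funext x u p q
  simp only [deriv_const_mul_field', deriv_pow_field]
  ring

lemma pQ_pQ_f : pQ (pQ f) = fun _x _u p _q => 3 / p := by
  rw [pQ_f, pQ_div_right]
  simp

-- Holds at `p = 0` too: there both sides are junk zeros (`deriv` of `3 / p` and `-3 / 0 ^ 2`).
lemma pP_pQ_pQ_f : pP (pQ (pQ f)) = fun _x _u p _q => -3 / p ^ 2 := by
  funext x u p q
  rw [pQ_pQ_f, pP]
  simp [div_eq_mul_inv]

/-- For `f(x,u,p,q) = (3/2)q²/p` of Example 3.3, the relative invariant
`I₂ = f_qq² + 6 f_pqq` equals `−9/p²` on the set `p ≠ 0`; in particular it is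
nowhere zero there. -/
theorem I2_nonzero_example3 :
    ∀ x u p q : ℝ, p ≠ 0 →
      (pQ (pQ f) x u p q) ^ 2 + 6 * pP (pQ (pQ f)) x u p q = -9 / p ^ 2 ∧
      (pQ (pQ f) x u p q) ^ 2 + 6 * pP (pQ (pQ f)) x u p q ≠ 0 := by
  intro x u p q hp
  have hI₂ : (pQ (pQ f) x u p q) ^ 2 + 6 * pP (pQ (pQ f)) x u p q = -9 / p ^ 2 := by
    rw [pP_pQ_pQ_f, pQ_pQ_f]
    field_simp
    ring
  exact ⟨hI₂, hI₂ ▸ by positivity⟩
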